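/- The function s(m) := 1 + log((√((1+m)/2) + √((1−m)/2))²) on (−1,1) satisfies s'(m) = −(m/√(1−m²))·(1/(1+√(1−m²))), and s extends continuously to [−1,1] with s(±1) = 1, and s is strictly concave on (−1,1). -/

import Mathlib

/-!
Since `√((1+m)/2) · √((1-m)/2) = √(1-m²)/2`, expanding the square gives the closed form
`s(m) = 1 + log (1 + √(1-m²))` on `[-1,1]`. Everything follows from it: the derivative by the
chain rule, the boundary values from `√0 = 0`, and strict concavity because `1 - m²` is strictly
concave and both `√` and `log` are concave and strictly increasing, so composing with them
preserves strict concavity.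
-/

/-- The limiting microcanonical entropy at density `ρ = 1`:
`s(m) = 1 + log((√((1+m)/2) + √((1−m)/2))²)`. -/
noncomputable def sEnt (m : ℝ) : ℝ :=
  1 + Real.log ((Real.sqrt ((1 + m)/2) + Real.sqrt ((1 - m)/2)) ^ 2)

open Real Set

noncomputable def sEntClosedForm (m : ℝ) : ℝ :=
  1 + log (1 + √(1 - m ^ 2))

lemma sqrt_add_sqrt_sq {a b : ℝ} (ha : 0 ≤ a) (hb : 0 ≤ b) :
    (√a + √b) ^ 2 = a + b + 2 * √(a * b) := by
  rw [add_sq, sq_sqrt ha, sq_sqrt hb, sqrt_mul ha]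
  ring

lemma sEnt_eqOn_Icc : EqOn sEnt sEntClosedForm (Icc (-1) 1) := by
  rintro m ⟨h₁, h₂⟩
  have hprod : (1 + m) / 2 * ((1 - m) / 2) = (1 - m ^ 2) / 2 ^ 2 := by ring
  unfold sEnt sEntClosedForm
  rw [sqrt_add_sqrt_sq (by linarith) (by linarith), hprod,
    sqrt_div' _ (by positivity), sqrt_sq zero_le_two]
  ring_nf

lemma continuous_sEntClosedForm : Continuous sEntClosedForm :=
  continuous_const.add <| (continuous_const.add (continuous_const.sub (continuous_pow 2)).sqrt).log
    fun _ ↦ (add_pos_of_pos_of_nonneg one_pos (sqrt_nonneg _)).ne'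

lemma hasDerivAt_sEntClosedForm {m : ℝ} (hm : m ∈ Ioo (-1) 1) :
    HasDerivAt sEntClosedForm
      (-(m / √(1 - m ^ 2)) * (1 / (1 + √(1 - m ^ 2)))) m := by
  obtain ⟨h₁, h₂⟩ := hm
  have hpos : 0 < 1 - m ^ 2 := by nlinarith
  have hinner : HasDerivAt (fun x : ℝ ↦ 1 - x ^ 2) (-(2 * m)) m := by
    simpa using (hasDerivAt_pow 2 m).const_sub 1
  exact ((((hinner.sqrt hpos.ne').const_add 1).log (by positivity)).const_add 1).congr_deriv
    (by ring)

lemma ConcaveOn.comp_strictConcaveOn_of_mapsTo {E : Type*} [AddCommMonoid E] [Module ℝ E]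
    {s : Set E} {t : Set ℝ} {f : E → ℝ} {g : ℝ → ℝ}
    (hg : ConcaveOn ℝ t g) (hg' : StrictMonoOn g t) (hf : StrictConcaveOn ℝ s f)
    (hst : MapsTo f s t) : StrictConcaveOn ℝ s (g ∘ f) := by
  refine ⟨hf.1, fun x hx y hy hxy a b ha hb hab ↦ ?_⟩
  calc a • g (f x) + b • g (f y) ≤ g (a • f x + b • f y) :=
        hg.2 (hst hx) (hst hy) ha.le hb.le hab
    _ < g (f (a • x + b • y)) :=
        hg' (hg.1 (hst hx) (hst hy) ha.le hb.le hab) (hst (hf.1 hx hy ha.le hb.le hab))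
          (hf.2 hx hy hxy ha hb hab)

lemma strictConcaveOn_one_sub_sq : StrictConcaveOn ℝ univ fun m : ℝ ↦ 1 - m ^ 2 :=
  ((Even.strictConvexOn_pow even_two two_ne_zero).neg.add_const 1).congr fun m _ ↦ by
    simp only [Pi.add_apply, Pi.neg_apply]
    ring

lemma strictConcaveOn_sqrt_one_sub_sq :
    StrictConcaveOn ℝ (Icc (-1) 1) fun m : ℝ ↦ √(1 - m ^ 2) :=
  strictConcaveOn_sqrt.concaveOn.comp_strictConcaveOn_of_mapsTo
    (fun _ ha _ _ hab ↦ (sqrt_lt_sqrt_iff ha).2 hab)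
    (strictConcaveOn_one_sub_sq.subset (subset_univ _) (convex_Icc _ _))
    fun m ⟨h₁, h₂⟩ ↦ show 0 ≤ 1 - m ^ 2 by nlinarith

lemma strictConcaveOn_sEntClosedForm : StrictConcaveOn ℝ (Icc (-1) 1) sEntClosedForm := by
  have hlog := strictConcaveOn_log_Ioi.concaveOn.comp_strictConcaveOn_of_mapsTo
    strictMonoOn_log (strictConcaveOn_sqrt_one_sub_sq.add_const 1)
    fun m _ ↦ show 0 < √(1 - m ^ 2) + 1 by positivity
  exact (hlog.add_const 1).congr fun m _ ↦ by
    simp only [sEntClosedForm, Pi.add_apply, Function.comp_apply, add_comm]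

/-- On `(-1,1)`, `s'(m) = −(m/√(1−m²))·(1/(1+√(1−m²)))`; `s` is continuous on `[−1,1]`
with `s(±1) = 1`; and `s` is strictly concave on `(−1,1)`. -/
theorem sEnt_properties :
    (∀ m ∈ Set.Ioo (-1:ℝ) 1,
        HasDerivAt sEnt (-(m / Real.sqrt (1 - m ^ 2)) * (1 / (1 + Real.sqrt (1 - m ^ 2)))) m) ∧
    ContinuousOn sEnt (Set.Icc (-1:ℝ) 1) ∧ sEnt 1 = 1 ∧ sEnt (-1) = 1 ∧
    StrictConcaveOn ℝ (Set.Ioo (-1:ℝ) 1) sEnt := by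
  have hboundary {m : ℝ} (hm : m ^ 2 = 1) (hmem : m ∈ Icc (-1) 1) : sEnt m = 1 := by
    simp [sEnt_eqOn_Icc hmem, sEntClosedForm, hm]
  refine ⟨fun m hm ↦ ?_, continuous_sEntClosedForm.continuousOn.congr sEnt_eqOn_Icc,
    hboundary (by norm_num) (by norm_num), hboundary (by norm_num) (by norm_num), ?_⟩
  · exact (hasDerivAt_sEntClosedForm hm).congr_of_eventuallyEq
      (sEnt_eqOn_Icc.eventuallyEq_of_mem (Icc_mem_nhds hm.1 hm.2))
  · exact (strictConcaveOn_sEntClosedForm.subset Ioo_subset_Icc_self (convex_Ioo _ _)).congr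
      fun m hm ↦ (sEnt_eqOn_Icc (Ioo_subset_Icc_self hm)).symm
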